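/- The simple type inference algorithm using capturing substitution is sound: if the inputs satisfy the uniqueness invariants (e has globally unique bound variables w.r.t. Γ, Γ is locally unique w.r.t. itself, and their bound variable sets are disjoint) and I(Γ, e) = (τ, ε), then Γ ⊢ e : τ ! ε is derivable in the declarative type system. -/

import Mathlib

/-!
Induction on the inference derivation, carrying two invariants of the inferred type: its
binders are locally unique and avoid the kind domain of `Γ`, and each of them is a binder of
`e` or of a type in `Γ`. In the type-application case these guarantee that no binder of
`∀a:κ.τ` is `a` or a free variable of `δ` (all of which lie in the kind domain), so the
capturing substitution `{a ↦ δ}τ` captures nothing and is a capture-avoiding substitution, as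
T-AppD requires. The remaining cases are the declarative rules, with T-Conv absorbing the
equivalences that the algorithm checks.
-/

/-- Kinds: the kind of effects and the kind of types. -/
inductive Kind : Type
| effect
| type

/-- Effects. -/
inductive Eff : Type
| tvar (a : ℕ)
| uvar (x : ℕ)
| pure
| join (e₁ e₂ : Eff)

/-- Types (with a base type Int). -/
inductive Ty : Type
| tvar (a : ℕ)
| uvar (x : ℕ)
| int
| arrow (t₁ : Ty) (e : Eff) (t₂ : Ty)
| all (a : ℕ) (k : Kind) (t : Ty)

/-- Descriptors: types or effects. -/
inductive Desc : Type
| ty (t : Ty)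
| eff (e : Eff)

/-- Expressions. -/
inductive Expr : Type
| var (x : ℕ)
| lit (n : ℤ)
| lam (x : ℕ) (t : Ty) (e : Expr)
| lamU (x : ℕ) (e : Expr)
| app (e₁ e₂ : Expr)
| lamD (a : ℕ) (k : Kind) (e : Expr)
| appD (e : Expr) (d : Desc)
| elet (x : ℕ) (e₁ e₂ : Expr)

/-- Environment entries: kind assignments and term-variable type assignments. -/
inductive Entry : Type
| kind (a : ℕ) (k : Kind)
| var (x : ℕ) (t : Ty)

abbrev Env := List Entry

def lookupVar : Env → ℕ → Option Ty
| [], _ => none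
| Entry.var y t :: Γ, x => if x = y then some t else lookupVar Γ x
| Entry.kind _ _ :: Γ, x => lookupVar Γ x

def lookupKind : Env → ℕ → Option Kind
| [], _ => none
| Entry.kind b k :: Γ, a => if a = b then some k else lookupKind Γ a
| Entry.var _ _ :: Γ, a => lookupKind Γ a

/-- Domain of kind assignments of an environment. -/
def Env.kdom : Env → Finset ℕ
| [] => ∅
| Entry.kind a _ :: Γ => insert a (Env.kdom Γ)
| Entry.var _ _ :: Γ => Env.kdom Γ

/-- Free type variables of an effect. -/
def Eff.fv : Eff → Finset ℕ
| .tvar a => {a}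
| .uvar _ => ∅
| .pure => ∅
| .join e₁ e₂ => e₁.fv ∪ e₂.fv

/-- Free unification variables of an effect. -/
def Eff.fuv : Eff → Finset ℕ
| .tvar _ => ∅
| .uvar x => {x}
| .pure => ∅
| .join e₁ e₂ => e₁.fuv ∪ e₂.fuv

/-- Free type variables of a type. -/
def Ty.fv : Ty → Finset ℕ
| .tvar a => {a}
| .uvar _ => ∅
| .int => ∅
| .arrow t₁ e t₂ => t₁.fv ∪ e.fv ∪ t₂.fv
| .all a _ t => t.fv.erase a

/-- Free unification variables of a type (including those in effect annotations). -/
def Ty.fuv : Ty → Finset ℕ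
| .tvar _ => ∅
| .uvar x => {x}
| .int => ∅
| .arrow t₁ e t₂ => t₁.fuv ∪ e.fuv ∪ t₂.fuv
| .all _ _ t => t.fuv

/-- Bound type variables of a type, as a list of binder occurrences. -/
def Ty.bv : Ty → List ℕ
| .tvar _ => []
| .uvar _ => []
| .int => []
| .arrow t₁ _ t₂ => t₁.bv ++ t₂.bv
| .all a _ t => a :: t.bv

def Desc.fv : Desc → Finset ℕ
| .ty t => t.fv
| .eff e => e.fv

def Desc.fuv : Desc → Finset ℕ
| .ty t => t.fuv
| .eff e => e.fuv

def Desc.bv : Desc → List ℕ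
| .ty t => t.bv
| .eff _ => []

/-- Bound type variables (binder occurrences) of an expression, including binders
occurring in type annotations and descriptors. -/
def Expr.bv : Expr → List ℕ
| .var _ => []
| .lit _ => []
| .lam _ t e => t.bv ++ e.bv
| .lamU _ e => e.bv
| .app e₁ e₂ => e₁.bv ++ e₂.bv
| .lamD a _ e => a :: e.bv
| .appD e d => e.bv ++ d.bv
| .elet _ e₁ e₂ => e₁.bv ++ e₂.bv

/-- Bound type variables occurring in the types assigned by an environment. -/
def Env.bv : Env → List ℕ
| [] => []
| Entry.kind _ _ :: Γ => Env.bv Γ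
| Entry.var _ t :: Γ => t.bv ++ Env.bv Γ

/-- Free unification variables of an environment. -/
def Env.fuv : Env → Finset ℕ
| [] => ∅
| Entry.kind _ _ :: Γ => Env.fuv Γ
| Entry.var _ t :: Γ => t.fuv ∪ Env.fuv Γ

/-- Capturing substitution of a descriptor for a type variable, in effects. -/
def Eff.substC (a : ℕ) (d : Desc) : Eff → Eff
| .tvar b => if b = a then (match d with | .eff e => e | .ty _ => .tvar b) else .tvar b
| .uvar x => .uvar x
| .pure => .pure
| .join e₁ e₂ => .join (e₁.substC a d) (e₂.substC a d)

/-- Capturing substitution of a descriptor for a type variable, in types: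
free occurrences of the variable are replaced literally, no binder is renamed. -/
def Ty.substC (a : ℕ) (d : Desc) : Ty → Ty
| .tvar b => if b = a then (match d with | .ty t => t | .eff _ => .tvar b) else .tvar b
| .uvar x => .uvar x
| .int => .int
| .arrow t₁ e t₂ => .arrow (t₁.substC a d) (e.substC a d) (t₂.substC a d)
| .all b k t => if b = a then .all b k t else .all b k (t.substC a d)

/-- Capturing renaming of a type variable in effects. -/
def Eff.ren (a b : ℕ) : Eff → Eff := Eff.substC a (.eff (.tvar b))

/-- Capturing renaming of a type variable in types. -/
def Ty.ren (a b : ℕ) : Ty → Ty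
| .tvar c => if c = a then .tvar b else .tvar c
| .uvar x => .uvar x
| .int => .int
| .arrow t₁ e t₂ => .arrow (t₁.ren a b) (e.ren a b) (t₂.ren a b)
| .all c k t => if c = a then .all c k t else .all c k (t.ren a b)

/-- Capturing substitution of a descriptor for a unification variable, in effects. -/
def Eff.substU (x : ℕ) (d : Desc) : Eff → Eff
| .tvar a => .tvar a
| .uvar y => if y = x then (match d with | .eff e => e | .ty _ => .uvar y) else .uvar y
| .pure => .pure
| .join e₁ e₂ => .join (e₁.substU x d) (e₂.substU x d)

/-- Capturing substitution of a descriptor for a unification variable, in types: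
no binder is renamed, so bound variables may capture free variables of the
substituted descriptor. -/
def Ty.substU (x : ℕ) (d : Desc) : Ty → Ty
| .tvar a => .tvar a
| .uvar y => if y = x then (match d with | .ty t => t | .eff _ => .uvar y) else .uvar y
| .int => .int
| .arrow t₁ e t₂ => .arrow (t₁.substU x d) (e.substU x d) (t₂.substU x d)
| .all a k t => .all a k (t.substU x d)

/-- Substitutions mapping unification variables to descriptors. -/
abbrev Subst := ℕ → Option Desc

def idSubst : Subst := fun _ => none

def Subst.single (x : ℕ) (d : Desc) : Subst := fun y => if y = x then some d else none

def Eff.applyS (θ : Subst) : Eff → Eff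
| .tvar a => .tvar a
| .uvar x => match θ x with | some (.eff e) => e | _ => .uvar x
| .pure => .pure
| .join e₁ e₂ => .join (e₁.applyS θ) (e₂.applyS θ)

def Ty.applyS (θ : Subst) : Ty → Ty
| .tvar a => .tvar a
| .uvar x => match θ x with | some (.ty t) => t | _ => .uvar x
| .int => .int
| .arrow t₁ e t₂ => .arrow (t₁.applyS θ) (e.applyS θ) (t₂.applyS θ)
| .all a k t => .all a k (t.applyS θ)

def Desc.applyS (θ : Subst) : Desc → Desc
| .ty t => .ty (t.applyS θ)
| .eff e => .eff (e.applyS θ)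

def Subst.comp (θ₂ θ₁ : Subst) : Subst :=
  fun x => match θ₁ x with
  | some d => some (d.applyS θ₂)
  | none => θ₂ x

def Env.applyS (θ : Subst) : Env → Env :=
  List.map (fun en => match en with
    | Entry.kind a k => Entry.kind a k
    | Entry.var x t => Entry.var x (t.applyS θ))

/-- Effect equivalence: least congruence containing the laws of an idempotent
commutative monoid with identity ∅ and operation ∪. -/
inductive EffEquiv : Eff → Eff → Prop
| refl (e) : EffEquiv e e
| symm {e₁ e₂} : EffEquiv e₁ e₂ → EffEquiv e₂ e₁
| trans {e₁ e₂ e₃} : EffEquiv e₁ e₂ → EffEquiv e₂ e₃ → EffEquiv e₁ e₃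
| congr {e₁ e₁' e₂ e₂'} : EffEquiv e₁ e₁' → EffEquiv e₂ e₂' →
    EffEquiv (.join e₁ e₂) (.join e₁' e₂')
| assoc (e₁ e₂ e₃) : EffEquiv (.join (.join e₁ e₂) e₃) (.join e₁ (.join e₂ e₃))
| comm (e₁ e₂) : EffEquiv (.join e₁ e₂) (.join e₂ e₁)
| idem (e) : EffEquiv (.join e e) e
| pureId (e) : EffEquiv (.join .pure e) e

/-- Type equivalence (α-equivalence): least congruence respecting effect
equivalence in arrows and allowing renaming of ∀-bound variables. -/
inductive TyEquiv : Ty → Ty → Prop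
| refl (t) : TyEquiv t t
| symm {t₁ t₂} : TyEquiv t₁ t₂ → TyEquiv t₂ t₁
| trans {t₁ t₂ t₃} : TyEquiv t₁ t₂ → TyEquiv t₂ t₃ → TyEquiv t₁ t₃
| arrow {t₁ t₁' t₂ t₂' e e'} : TyEquiv t₁ t₁' → EffEquiv e e' → TyEquiv t₂ t₂' →
    TyEquiv (.arrow t₁ e t₂) (.arrow t₁' e' t₂')
| all {t t'} (a : ℕ) (k : Kind) : TyEquiv t t' → TyEquiv (.all a k t) (.all a k t')
| alpha {t : Ty} (a b : ℕ) (k : Kind) : b ∉ t.fv → b ∉ t.bv →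
    TyEquiv (.all a k t) (.all b k (t.ren a b))

/-- Monomorphic types. -/
inductive Mono : Ty → Prop
| tvar (a : ℕ) : Mono (.tvar a)
| uvar (x : ℕ) : Mono (.uvar x)
| int : Mono .int
| arrow {t₁ t₂ : Ty} (e : Eff) : Mono t₁ → Mono t₂ → Mono (.arrow t₁ e t₂)

/-- Kinding judgment Γ ⊢ δ : κ. -/
inductive Kinding : Env → Desc → Kind → Prop
| varTy {Γ a} : lookupKind Γ a = some .type → Kinding Γ (.ty (.tvar a)) .type
| varEff {Γ a} : lookupKind Γ a = some .effect → Kinding Γ (.eff (.tvar a)) .effect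
| int {Γ} : Kinding Γ (.ty .int) .type
| arrow {Γ t₁ t₂ e} : Kinding Γ (.ty t₁) .type → Kinding Γ (.ty t₂) .type →
    Kinding Γ (.eff e) .effect → Kinding Γ (.ty (.arrow t₁ e t₂)) .type
| all {Γ a k t} : Kinding (Entry.kind a k :: Γ) (.ty t) .type →
    Kinding Γ (.ty (.all a k t)) .type
| pure {Γ} : Kinding Γ (.eff .pure) .effect
| join {Γ e₁ e₂} : Kinding Γ (.eff e₁) .effect → Kinding Γ (.eff e₂) .effect →
    Kinding Γ (.eff (.join e₁ e₂)) .effect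

def Desc.tyOr (d : Desc) (t : Ty) : Ty :=
  match d with
  | .ty t' => t'
  | .eff _ => t

/-- Capture-avoiding substitution of a descriptor for a type variable, as a
relation: {a ↦ d} τ = τ', with binders renamed as needed to avoid capture. -/
inductive SubstCA (a : ℕ) (d : Desc) : Ty → Ty → Prop
| tvar_eq : SubstCA a d (.tvar a) (d.tyOr (.tvar a))
| tvar_ne {b} : b ≠ a → SubstCA a d (.tvar b) (.tvar b)
| uvar (x) : SubstCA a d (.uvar x) (.uvar x)
| int : SubstCA a d .int .int
| arrow {t₁ t₁' t₂ t₂' e} : SubstCA a d t₁ t₁' → SubstCA a d t₂ t₂' →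
    SubstCA a d (.arrow t₁ e t₂) (.arrow t₁' (e.substC a d) t₂')
| all_eq {k t} : SubstCA a d (.all a k t) (.all a k t)
| all_ne {b k t t'} : b ≠ a → b ∉ d.fv → SubstCA a d t t' →
    SubstCA a d (.all b k t) (.all b k t')
| all_ren {b c k t t'} : b ≠ a → c ≠ a → c ∉ d.fv → c ∉ t.fv → c ∉ t.bv →
    SubstCA a d (t.ren b c) t' → SubstCA a d (.all b k t) (.all c k t')

/-- The declarative type system (with the restored well-formedness premises),
including the rules for unannotated lambdas, integer literals and let-bindings. -/
inductive Typing : Env → Expr → Ty → Eff → Prop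
| var {Γ x τ} : lookupVar Γ x = some τ → Typing Γ (.var x) τ .pure
| lit {Γ n} : Typing Γ (.lit n) .int .pure
| lam {Γ x τ₁ τ₂ e ε} : Kinding Γ (.ty τ₁) .type →
    Typing (Entry.var x τ₁ :: Γ) e τ₂ ε →
    Typing Γ (.lam x τ₁ e) (.arrow τ₁ ε τ₂) .pure
| lamU {Γ x τ₁ τ₂ e ε} : Kinding Γ (.ty τ₁) .type → Mono τ₁ →
    Typing (Entry.var x τ₁ :: Γ) e τ₂ ε →
    Typing Γ (.lamU x e) (.arrow τ₁ ε τ₂) .pure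
| app {Γ e₁ e₂ τ₁ τ₂ ε ε₁ ε₂} : Typing Γ e₁ (.arrow τ₂ ε τ₁) ε₁ →
    Typing Γ e₂ τ₂ ε₂ →
    Typing Γ (.app e₁ e₂) τ₁ (.join ε₁ (.join ε₂ ε))
| lamD {Γ a k e τ} : Typing (Entry.kind a k :: Γ) e τ .pure →
    Typing Γ (.lamD a k e) (.all a k τ) .pure
| appD {Γ e a k τ τ' δ ε} : Typing Γ e (.all a k τ) ε → Kinding Γ δ k →
    SubstCA a δ τ τ' → Typing Γ (.appD e δ) τ' ε
| elet {Γ x e₁ e₂ τ₁ τ₂ ε₁ ε₂} : Typing Γ e₁ τ₁ ε₁ →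
    Typing (Entry.var x τ₁ :: Γ) e₂ τ₂ ε₂ →
    Typing Γ (.elet x e₁ e₂) τ₂ (.join ε₁ ε₂)
| conv {Γ e τ₁ τ₂ ε₁ ε₂} : Typing Γ e τ₁ ε₁ → TyEquiv τ₁ τ₂ → EffEquiv ε₁ ε₂ →
    Typing Γ e τ₂ ε₂

/-- The simplified declarative type system: the system of the figure without
the rule T-LamU (and without let-bindings). -/
inductive TypingND : Env → Expr → Ty → Eff → Prop
| var {Γ x τ} : lookupVar Γ x = some τ → TypingND Γ (.var x) τ .pure
| lit {Γ n} : TypingND Γ (.lit n) .int .pure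
| lam {Γ x τ₁ τ₂ e ε} : Kinding Γ (.ty τ₁) .type →
    TypingND (Entry.var x τ₁ :: Γ) e τ₂ ε →
    TypingND Γ (.lam x τ₁ e) (.arrow τ₁ ε τ₂) .pure
| app {Γ e₁ e₂ τ₁ τ₂ ε ε₁ ε₂} : TypingND Γ e₁ (.arrow τ₂ ε τ₁) ε₁ →
    TypingND Γ e₂ τ₂ ε₂ →
    TypingND Γ (.app e₁ e₂) τ₁ (.join ε₁ (.join ε₂ ε))
| lamD {Γ a k e τ} : TypingND (Entry.kind a k :: Γ) e τ .pure →
    TypingND Γ (.lamD a k e) (.all a k τ) .pure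
| appD {Γ e a k τ τ' δ ε} : TypingND Γ e (.all a k τ) ε → Kinding Γ δ k →
    SubstCA a δ τ τ' → TypingND Γ (.appD e δ) τ' ε
| conv {Γ e τ₁ τ₂ ε₁ ε₂} : TypingND Γ e τ₁ ε₁ → TyEquiv τ₁ τ₂ → EffEquiv ε₁ ε₂ →
    TypingND Γ e τ₂ ε₂

/-- τ has locally unique bound variables w.r.t. a domain of variables:
no binder in τ shadows another binder of τ, and no binder is in the domain. -/
def luTy (dom : Finset ℕ) : Ty → Prop
| .tvar _ => True
| .uvar _ => True
| .int => True
| .arrow t₁ _ t₂ => luTy dom t₁ ∧ luTy dom t₂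
| .all a _ t => a ∉ dom ∧ luTy (insert a dom) t

def luDesc (dom : Finset ℕ) : Desc → Prop
| .ty t => luTy dom t
| .eff _ => True

/-- An environment has locally unique bound variables w.r.t. itself. -/
def luEnv (Γ : Env) : Prop := ∀ x τ, Entry.var x τ ∈ Γ → luTy Γ.kdom τ

/-- e has globally unique bound variables w.r.t. a domain: every binder occurs
at most once in e and no binder is in the domain. -/
def guExpr (dom : Finset ℕ) (e : Expr) : Prop :=
  e.bv.Nodup ∧ ∀ a ∈ e.bv, a ∉ dom

/-- The simple type inference algorithm (for the calculus without unannotated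
lambdas), using capturing substitution in the type application case. -/
inductive SInfer : Env → Expr → Ty → Eff → Prop
| var {Γ x τ} : lookupVar Γ x = some τ → SInfer Γ (.var x) τ .pure
| lit {Γ n} : SInfer Γ (.lit n) .int .pure
| lam {Γ x τ τ' e ε} : Kinding Γ (.ty τ) .type →
    SInfer (Entry.var x τ :: Γ) e τ' ε →
    SInfer Γ (.lam x τ e) (.arrow τ ε τ') .pure
| app {Γ e₁ e₂ τa τ₁ τ₂ ε ε₁ ε₂} : SInfer Γ e₁ (.arrow τa ε τ₁) ε₁ →
    SInfer Γ e₂ τ₂ ε₂ → TyEquiv τa τ₂ →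
    SInfer Γ (.app e₁ e₂) τ₁ (.join ε₁ (.join ε₂ ε))
| lamD {Γ a k e τ ε} : SInfer (Entry.kind a k :: Γ) e τ ε → EffEquiv ε .pure →
    SInfer Γ (.lamD a k e) (.all a k τ) .pure
| appD {Γ e a k τ δ ε} : SInfer Γ e (.all a k τ) ε → Kinding Γ δ k →
    SInfer Γ (.appD e δ) (τ.substC a δ) ε

/-- The algebraic unification algorithm, as a relation. In the ∀-case a fresh
variable is chosen and both bound variables are renamed to it (capturing
renaming). Effect unification is delayed into constraints. -/
inductive Unify : Ty → Ty → Subst → List (Eff × Eff) → Prop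
| tvar (a) : Unify (.tvar a) (.tvar a) idSubst []
| int : Unify .int .int idSubst []
| uvarRefl (x) : Unify (.uvar x) (.uvar x) idSubst []
| uvarL {x τ} : x ∉ τ.fuv → Mono τ → Unify (.uvar x) τ (Subst.single x (.ty τ)) []
| uvarR {x τ} : x ∉ τ.fuv → Mono τ → Unify τ (.uvar x) (Subst.single x (.ty τ)) []
| arrow {t₁ t₂ t₁' t₂' e₁ e₂ θ₁ θ₂ C₁ C₂} :
    Unify t₁ t₂ θ₁ C₁ →
    Unify (t₁'.applyS θ₁) (t₂'.applyS θ₁) θ₂ C₂ →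
    Unify (.arrow t₁ e₁ t₁') (.arrow t₂ e₂ t₂') (θ₂.comp θ₁)
      (C₁ ++ C₂ ++ [(e₁, e₂)])
| all {a₁ a₂ b k t₁ t₂ θ C} :
    b ∉ t₁.fv ∪ t₂.fv → b ∉ t₁.bv → b ∉ t₂.bv →
    Unify (t₁.ren a₁ b) (t₂.ren a₂ b) θ C →
    Unify (.all a₁ k t₁) (.all a₂ k t₂) θ C

/-- Models: partial maps from effect unification variables to effects. -/
abbrev EModel := ℕ → Option Eff

/-- The identity substitution, as a model. -/
def idModel : EModel := fun _ => none

def Eff.applyM (μ : EModel) : Eff → Eff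
| .tvar a => .tvar a
| .uvar x => (μ x).getD (.uvar x)
| .pure => .pure
| .join e₁ e₂ => .join (e₁.applyM μ) (e₂.applyM μ)

def Ty.applyM (μ : EModel) : Ty → Ty
| .tvar a => .tvar a
| .uvar x => .uvar x
| .int => .int
| .arrow t₁ e t₂ => .arrow (t₁.applyM μ) (e.applyM μ) (t₂.applyM μ)
| .all a k t => .all a k (t.applyM μ)

/-- A model maps (effect) unification variables to ground effects. -/
def IsModel (μ : EModel) : Prop := ∀ x e, μ x = some e → Eff.fuv e = ∅

/-- μ ⊨ C : the model equates both sides of every constraint up to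
effect equivalence. -/
def Models (μ : EModel) (C : List (Eff × Eff)) : Prop :=
  ∀ p ∈ C, EffEquiv (Eff.applyM μ p.1) (Eff.applyM μ p.2)

/-- Atomic identifiers (type variables and unification variables) of an effect. -/
def Eff.ids : Eff → Finset (ℕ ⊕ ℕ)
| .tvar a => {Sum.inl a}
| .uvar x => {Sum.inr x}
| .pure => ∅
| .join e₁ e₂ => e₁.ids ∪ e₂.ids

/-- Free identifiers (type variables and unification variables) of a type. -/
def Ty.ids : Ty → Finset (ℕ ⊕ ℕ)
| .tvar a => {Sum.inl a}
| .uvar x => {Sum.inr x}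
| .int => ∅
| .arrow t₁ e t₂ => t₁.ids ∪ e.ids ∪ t₂.ids
| .all a _ t => t.ids \ {Sum.inl a}

def constrIds (C : List (Eff × Eff)) : Finset (ℕ ⊕ ℕ) :=
  C.foldr (fun p s => p.1.ids ∪ p.2.ids ∪ s) ∅

/-- Free identifiers of an environment (domain of kind assignments and
identifiers of assigned types). -/
def Env.ids : Env → Finset (ℕ ⊕ ℕ)
| [] => ∅
| Entry.kind a _ :: Γ => insert (Sum.inl a) (Env.ids Γ)
| Entry.var _ t :: Γ => t.ids ∪ Env.ids Γ

/-- Map identifiers of an effect through a function. -/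
def Eff.mapIds (g : ℕ ⊕ ℕ → Eff) : Eff → Eff
| .tvar a => g (Sum.inl a)
| .uvar x => g (Sum.inr x)
| .pure => .pure
| .join e₁ e₂ => .join (e₁.mapIds g) (e₂.mapIds g)

/-- The Jouvelot–Gifford type-and-effect reconstruction algorithm, as a
relation R(Γ, e) = (τ, ε, θ, C); freshness of generated variables is expressed
relative to the data available at the corresponding point. -/
inductive RInfer : Env → Expr → Ty → Eff → Subst → List (Eff × Eff) → Prop
| var {Γ x τ} : lookupVar Γ x = some τ → RInfer Γ (.var x) τ .pure idSubst []
| lit {Γ n} : RInfer Γ (.lit n) .int .pure idSubst []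
| lam {Γ x τ τ' e ε θ C} : Kinding Γ (.ty τ) .type →
    RInfer (Entry.var x τ :: Γ) e τ' ε θ C →
    RInfer Γ (.lam x τ e) (.arrow τ ε τ') .pure θ C
| lamU {Γ x z e τ ε θ C} :
    Sum.inr z ∉ Env.ids Γ →
    RInfer (Entry.var x (.uvar z) :: Γ) e τ ε θ C →
    RInfer Γ (.lamU x e) (.arrow (Ty.applyS θ (.uvar z)) ε τ) .pure θ C
| app {Γ e₁ e₂ τ₁ τ₂ ε₁ ε₂ θ₁ θ₂ θ₃ C₁ C₂ C₃ xt xe} :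
    RInfer Γ e₁ τ₁ ε₁ θ₁ C₁ →
    RInfer (Env.applyS θ₁ Γ) e₂ τ₂ ε₂ θ₂ C₂ →
    xt ≠ xe →
    Sum.inr xt ∉ Env.ids Γ ∪ τ₁.ids ∪ τ₂.ids ∪ ε₁.ids ∪ ε₂.ids ∪ constrIds C₁ ∪ constrIds C₂ →
    Sum.inr xe ∉ Env.ids Γ ∪ τ₁.ids ∪ τ₂.ids ∪ ε₁.ids ∪ ε₂.ids ∪ constrIds C₁ ∪ constrIds C₂ →
    Unify (τ₁.applyS θ₂) (.arrow τ₂ (.uvar xe) (.uvar xt)) θ₃ C₃ →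
    RInfer Γ (.app e₁ e₂) (Ty.applyS θ₃ (.uvar xt))
      (.join ε₁ (.join ε₂ (.uvar xe))) ((θ₃.comp θ₂).comp θ₁) (C₁ ++ C₂ ++ C₃)
| lamD {Γ a k e τ ε θ C C' b} {f : ℕ ⊕ ℕ → ℕ} {g : ℕ ⊕ ℕ → Eff} :
    RInfer (Entry.kind a k :: Γ) e τ ε θ C →
    C' = (ε, Eff.pure) :: C →
    Sum.inl b ∉ constrIds C' ∪ Env.ids (Env.applyS θ (Entry.kind a k :: Γ)) ∪ τ.ids →
    (∀ i ∈ constrIds C' \ Env.ids (Env.applyS θ (Entry.kind a k :: Γ)),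
      Sum.inr (f i) ∉ constrIds C' ∪ Env.ids (Env.applyS θ (Entry.kind a k :: Γ)) ∪ τ.ids) →
    Set.InjOn f ↑(constrIds C' \ Env.ids (Env.applyS θ (Entry.kind a k :: Γ))) →
    g = (fun i => if i = Sum.inl a then Eff.tvar b
      else if i ∈ constrIds C' \ Env.ids (Env.applyS θ (Entry.kind a k :: Γ))
        then Eff.uvar (f i)
        else match i with | Sum.inl t => Eff.tvar t | Sum.inr u => Eff.uvar u) →
    RInfer Γ (.lamD a k e) (.all a k τ) .pure θ
      ((C'.map (fun p => (Eff.mapIds g p.1, Eff.mapIds g p.2))) ++ C')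
| appD {Γ e a k τ ε θ C δ} :
    RInfer Γ e (.all a k τ) ε θ C →
    Kinding Γ δ k →
    RInfer Γ (.appD e δ) (τ.substC a δ) ε θ
      (C.map (fun p => (p.1.substC a δ, p.2.substC a δ)))

/-- ∀-free types. -/
def noForall : Ty → Prop
| .all _ _ _ => False
| .arrow t₁ _ t₂ => noForall t₁ ∧ noForall t₂
| _ => True

theorem mem_of_lookupVar_eq_some {Γ : Env} {x : ℕ} {τ : Ty} (h : lookupVar Γ x = some τ) :
    Entry.var x τ ∈ Γ := by
  induction Γ with
  | nil => simp [lookupVar] at h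
  | cons en Γ ih =>
    cases en with
    | kind a k => exact List.mem_cons_of_mem _ (ih h)
    | var y t =>
      simp only [lookupVar] at h
      split_ifs at h with hxy
      · cases h; simp [hxy]
      · exact List.mem_cons_of_mem _ (ih h)

theorem mem_kdom_of_lookupKind_eq_some {Γ : Env} {a : ℕ} {k : Kind}
    (h : lookupKind Γ a = some k) : a ∈ Γ.kdom := by
  induction Γ with
  | nil => simp [lookupKind] at h
  | cons en Γ ih =>
    cases en with
    | var x t => exact ih h
    | kind b k' =>
      simp only [lookupKind] at h
      simp only [Env.kdom, Finset.mem_insert]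
      split_ifs at h with hab
      · exact Or.inl hab
      · exact Or.inr (ih h)

theorem Env.bv_subset_of_mem {Γ : Env} {x : ℕ} {τ : Ty} (h : Entry.var x τ ∈ Γ) :
    τ.bv ⊆ Γ.bv := by
  induction Γ with
  | nil => simp at h
  | cons en Γ ih =>
    rcases List.mem_cons.1 h with rfl | hmem
    · simp [Env.bv]
    · cases en with
      | kind a k => exact ih hmem
      | var y t => exact List.Subset.trans (ih hmem) (List.subset_append_right _ _)

theorem Kinding.fv_subset_kdom {Γ : Env} {d : Desc} {k : Kind} (h : Kinding Γ d k) :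
    d.fv ⊆ Γ.kdom := by
  induction h with
  | varTy h | varEff h =>
    simpa [Desc.fv, Ty.fv, Eff.fv] using mem_kdom_of_lookupKind_eq_some h
  | int | pure => simp [Desc.fv, Ty.fv, Eff.fv]
  | arrow _ _ _ ih₁ ih₂ ih₃ =>
    simp only [Desc.fv, Ty.fv, Finset.union_subset_iff] at *
    exact ⟨⟨ih₁, ih₃⟩, ih₂⟩
  | all _ ih =>
    exact Finset.subset_insert_iff.1 ih
  | join _ _ ih₁ ih₂ =>
    simp only [Desc.fv, Eff.fv, Finset.union_subset_iff] at *
    exact ⟨ih₁, ih₂⟩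

theorem luTy.notMem_of_mem_bv {dom : Finset ℕ} {t : Ty} (h : luTy dom t) :
    ∀ b ∈ t.bv, b ∉ dom := by
  induction t generalizing dom with
  | tvar | uvar | int => simp [Ty.bv]
  | arrow t₁ e t₂ ih₁ ih₂ =>
    simp only [Ty.bv, List.mem_append]
    rintro b (hb | hb)
    exacts [ih₁ h.1 b hb, ih₂ h.2 b hb]
  | all a k t ih =>
    simp only [Ty.bv, List.mem_cons]
    rintro b (rfl | hb)
    · exact h.1
    · exact fun hd => ih h.2 b hb (Finset.mem_insert_of_mem hd)

theorem luTy_of_nodup {dom : Finset ℕ} {t : Ty} (hnd : t.bv.Nodup)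
    (hdom : ∀ b ∈ t.bv, b ∉ dom) : luTy dom t := by
  induction t generalizing dom with
  | tvar | uvar | int => trivial
  | arrow t₁ e t₂ ih₁ ih₂ =>
    simp only [Ty.bv, List.nodup_append, List.mem_append] at hnd hdom
    exact ⟨ih₁ hnd.1 fun b hb => hdom b (.inl hb), ih₂ hnd.2.1 fun b hb => hdom b (.inr hb)⟩
  | all a k t ih =>
    simp only [Ty.bv, List.nodup_cons, List.mem_cons] at hnd hdom
    refine ⟨hdom a (.inl rfl), ih hnd.2 fun b hb => ?_⟩
    simp only [Finset.mem_insert, not_or]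
    exact ⟨fun hba => hnd.1 (hba ▸ hb), hdom b (.inr hb)⟩

theorem luTy.insert_of_notMem_bv {dom : Finset ℕ} {t : Ty} {c : ℕ} (h : luTy dom t)
    (hc : c ∉ t.bv) : luTy (insert c dom) t := by
  induction t generalizing dom with
  | tvar | uvar | int => trivial
  | arrow t₁ e t₂ ih₁ ih₂ =>
    simp only [Ty.bv, List.mem_append, not_or] at hc
    exact ⟨ih₁ h.1 hc.1, ih₂ h.2 hc.2⟩
  | all a k t ih =>
    simp only [Ty.bv, List.mem_cons, not_or] at hc
    refine ⟨?_, Finset.insert_comm c a dom ▸ ih h.2 hc.2⟩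
    simpa [Finset.mem_insert, Ne.symm hc.1] using h.1

theorem luDesc.insert_of_notMem_bv {dom : Finset ℕ} {d : Desc} {c : ℕ} (h : luDesc dom d)
    (hc : c ∉ d.bv) : luDesc (insert c dom) d := by
  cases d with
  | ty t => exact luTy.insert_of_notMem_bv h hc
  | eff => trivial

theorem Ty.bv_substC_subset (a : ℕ) (d : Desc) (t : Ty) : (t.substC a d).bv ⊆ t.bv ++ d.bv := by
  induction t with
  | tvar c =>
    simp only [Ty.substC]
    split_ifs
    · cases d <;> simp [Ty.bv, Desc.bv]
    · simp [Ty.bv]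
  | uvar | int => simp [Ty.substC, Ty.bv]
  | arrow t₁ e t₂ ih₁ ih₂ =>
    intro b hb
    simp only [Ty.substC, Ty.bv, List.mem_append] at hb ⊢
    grind
  | all c k t ih =>
    simp only [Ty.substC]
    split_ifs
    · exact List.subset_append_left _ _
    · intro b hb
      simp only [Ty.bv, List.mem_cons, List.cons_append, List.mem_append] at hb ⊢
      grind

theorem luTy.substC {a : ℕ} {d : Desc} {dom : Finset ℕ} {t : Ty} (h : luTy (insert a dom) t)
    (hd : luDesc dom d) (hdisj : d.bv.Disjoint t.bv) : luTy dom (t.substC a d) := by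
  induction t generalizing dom with
  | tvar c =>
    simp only [Ty.substC]
    split_ifs
    · cases d with
      | ty => exact hd
      | eff => trivial
    · trivial
  | uvar | int => trivial
  | arrow t₁ e t₂ ih₁ ih₂ =>
    simp only [Ty.bv, List.disjoint_append_right] at hdisj
    exact ⟨ih₁ h.1 hd hdisj.1, ih₂ h.2 hd hdisj.2⟩
  | all c k t ih =>
    simp only [Ty.bv, List.disjoint_cons_right] at hdisj
    obtain ⟨hc, ht⟩ := h
    simp only [Finset.mem_insert, not_or] at hc
    simp only [Ty.substC, if_neg hc.1]
    exact ⟨hc.2,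
      ih (Finset.insert_comm a c dom ▸ ht) (hd.insert_of_notMem_bv hdisj.1) hdisj.2⟩

theorem substCA_substC {a : ℕ} {d : Desc} {t : Ty} (h : ∀ b ∈ t.bv, b ≠ a ∧ b ∉ d.fv) :
    SubstCA a d t (t.substC a d) := by
  induction t with
  | tvar c =>
    by_cases hca : c = a
    · subst hca
      cases d <;> simpa [Ty.substC, Desc.tyOr] using SubstCA.tvar_eq
    · simpa [Ty.substC, hca] using SubstCA.tvar_ne hca
  | uvar x => exact .uvar x
  | int => exact .int
  | arrow t₁ e t₂ ih₁ ih₂ =>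
    simp only [Ty.bv, List.mem_append] at h
    exact .arrow (ih₁ fun b hb => h b (.inl hb)) (ih₂ fun b hb => h b (.inr hb))
  | all c k t ih =>
    simp only [Ty.bv, List.mem_cons] at h
    obtain ⟨hca, hcd⟩ := h c (.inl rfl)
    simp only [Ty.substC, if_neg hca]
    exact .all_ne hca hcd (ih fun b hb => h b (.inr hb))

structure UniqueBinders (Γ : Env) (e : Expr) : Prop where
  gu : guExpr Γ.kdom e
  lu : luEnv Γ
  disjoint : Γ.bv.Disjoint e.bv

namespace UniqueBinders

variable {Γ : Env}

theorem lam {x : ℕ} {t : Ty} {e : Expr} (h : UniqueBinders Γ (.lam x t e)) :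
    UniqueBinders (Entry.var x t :: Γ) e := by
  obtain ⟨⟨hnd, hdom⟩, hlu, hdisj⟩ := h
  simp only [Expr.bv, List.nodup_append, List.mem_append, List.disjoint_append_right]
    at hnd hdom hdisj
  refine ⟨⟨hnd.2.1, fun b hb => hdom b (.inr hb)⟩, fun y ty hy => ?_, ?_⟩
  · rcases List.mem_cons.1 hy with hy | hy
    · cases hy
      exact luTy_of_nodup hnd.1 fun b hb => hdom b (.inl hb)
    · exact hlu y ty hy
  · simp only [Env.bv, List.disjoint_append_left]
    exact ⟨fun b hbt hbe => hnd.2.2 b hbt b hbe rfl, hdisj.2⟩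

theorem app_left {e₁ e₂ : Expr} (h : UniqueBinders Γ (.app e₁ e₂)) :
    UniqueBinders Γ e₁ :=
  ⟨⟨h.gu.1.of_append_left, fun b hb => h.gu.2 b (List.mem_append_left _ hb)⟩, h.lu,
    (List.disjoint_append_right.1 h.disjoint).1⟩

theorem app_right {e₁ e₂ : Expr} (h : UniqueBinders Γ (.app e₁ e₂)) :
    UniqueBinders Γ e₂ :=
  ⟨⟨h.gu.1.of_append_right, fun b hb => h.gu.2 b (List.mem_append_right _ hb)⟩, h.lu,
    (List.disjoint_append_right.1 h.disjoint).2⟩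

theorem lamD {a : ℕ} {k : Kind} {e : Expr} (h : UniqueBinders Γ (.lamD a k e)) :
    UniqueBinders (Entry.kind a k :: Γ) e := by
  obtain ⟨⟨hnd, hdom⟩, hlu, hdisj⟩ := h
  simp only [Expr.bv, List.nodup_cons, List.mem_cons, List.disjoint_cons_right]
    at hnd hdom hdisj
  refine ⟨⟨hnd.2, fun b hb => ?_⟩, fun y ty hy => ?_, hdisj.2⟩
  · simp only [Env.kdom, Finset.mem_insert, not_or]
    exact ⟨fun hba => hnd.1 (hba ▸ hb), hdom b (.inr hb)⟩
  · have hy : Entry.var y ty ∈ Γ := by simpa using hy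
    exact (hlu y ty hy).insert_of_notMem_bv fun ha => hdisj.1 (Env.bv_subset_of_mem hy ha)

theorem appD {e : Expr} {δ : Desc} (h : UniqueBinders Γ (.appD e δ)) : UniqueBinders Γ e :=
  ⟨⟨h.gu.1.of_append_left, fun b hb => h.gu.2 b (List.mem_append_left _ hb)⟩, h.lu,
    (List.disjoint_append_right.1 h.disjoint).1⟩

theorem luDesc_appD {e : Expr} {δ : Desc} (h : UniqueBinders Γ (.appD e δ)) :
    luDesc Γ.kdom δ := by
  cases δ with
  | ty t =>
    exact luTy_of_nodup h.gu.1.of_append_right fun b hb => h.gu.2 b (List.mem_append_right _ hb)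
  | eff => trivial

theorem disjoint_appD {e : Expr} {δ : Desc} (h : UniqueBinders Γ (.appD e δ)) :
    δ.bv.Disjoint (e.bv ++ Γ.bv) :=
  List.disjoint_append_right.2
    ⟨(List.disjoint_of_nodup_append h.gu.1).symm,
      (List.disjoint_append_right.1 h.disjoint).2.symm⟩

end UniqueBinders

theorem TypingND.appD_substC {Γ : Env} {e : Expr} {a : ℕ} {k : Kind} {t : Ty} {δ : Desc}
    {ε : Eff} (hT : TypingND Γ e (.all a k t) ε) (hK : Kinding Γ δ k)
    (hL : luTy Γ.kdom (.all a k t)) :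
    TypingND Γ (.appD e δ) (t.substC a δ) ε := by
  refine .appD hT hK (substCA_substC fun b hb => ?_)
  have hb := hL.2.notMem_of_mem_bv b hb
  simp only [Finset.mem_insert, not_or] at hb
  exact ⟨hb.1, fun hbδ => hb.2 (hK.fv_subset_kdom hbδ)⟩

theorem SInfer.sound_of_uniqueBinders {Γ : Env} {e : Expr} {τ : Ty} {ε : Eff}
    (h : SInfer Γ e τ ε) (hu : UniqueBinders Γ e) :
    TypingND Γ e τ ε ∧ luTy Γ.kdom τ ∧ τ.bv ⊆ e.bv ++ Γ.bv := by
  induction h with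
  | var hx =>
    have hmem := mem_of_lookupVar_eq_some hx
    exact ⟨.var hx, hu.lu _ _ hmem,
      List.Subset.trans (Env.bv_subset_of_mem hmem) (List.subset_append_right _ _)⟩
  | lit => exact ⟨.lit, trivial, by simp [Ty.bv]⟩
  | lam hK _ ih =>
    obtain ⟨hT, hL, hB⟩ := ih hu.lam
    refine ⟨.lam hK hT, ⟨hu.lam.lu _ _ List.mem_cons_self, hL⟩, ?_⟩
    simp only [Ty.bv, Expr.bv, Env.bv, List.subset_def, List.mem_append] at hB ⊢
    grind
  | app _ _ hτ ih₁ ih₂ =>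
    obtain ⟨hT₁, hL₁, hB₁⟩ := ih₁ hu.app_left
    obtain ⟨hT₂, -, -⟩ := ih₂ hu.app_right
    refine ⟨.app (.conv hT₁ (.arrow hτ (.refl _) (.refl _)) (.refl _)) hT₂, hL₁.2, ?_⟩
    simp only [Ty.bv, Expr.bv, List.subset_def, List.mem_append] at hB₁ ⊢
    grind
  | lamD _ hε ih =>
    obtain ⟨hT, hL, hB⟩ := ih hu.lamD
    refine ⟨.lamD (.conv hT (.refl _) hε), ⟨hu.gu.2 _ List.mem_cons_self, hL⟩, ?_⟩
    simp only [Ty.bv, Expr.bv, Env.bv, List.subset_def, List.mem_append, List.mem_cons] at hB ⊢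
    grind
  | @appD Γ e a k t δ ε _ hK ih =>
    obtain ⟨hT, hL, hB⟩ := ih hu.appD
    refine ⟨hT.appD_substC hK hL, hL.2.substC hu.luDesc_appD ?_, ?_⟩
    · exact List.disjoint_of_subset_right (List.Subset.trans (List.subset_cons_self _ _) hB)
        hu.disjoint_appD
    · have hsub := Ty.bv_substC_subset a δ t
      simp only [Ty.bv, Expr.bv, List.subset_def, List.mem_append, List.mem_cons] at hB hsub ⊢
      grind

/-- Soundness of the simple type inference algorithm (using
capturing substitution) w.r.t. the declarative type system without T-LamU,
under the uniqueness invariants on the inputs. -/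
theorem sInfer_sound (Γ : Env) (e : Expr) (τ : Ty) (ε : Eff)
    (hgu : guExpr (Env.kdom Γ) e)
    (hluΓ : luEnv Γ)
    (hdisj : ∀ a, a ∈ Env.bv Γ → a ∉ e.bv)
    (h : SInfer Γ e τ ε) :
    TypingND Γ e τ ε :=
  (h.sound_of_uniqueBinders ⟨hgu, hluΓ, fun _ ha hb => hdisj _ ha hb⟩).1
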